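/- Let A → R be a ring extension. If for every homomorphism of right R-modules f : P → R* with P finitely generated projective over A, the kernel of f admits a surjection from a direct sum of right R-modules each finitely generated projective over A, then the canonical map ζ : R° → R* is injective. -/

import Mathlib

open MulOpposite

universe u

variable (A R : Type u) [Ring A] [Ring R] (φ : A →+* R)

/-- An object of the category `𝒜_R`: a right `R`-module (encoded as a module
over `Rᵐᵒᵖ`) which, via restriction of scalars along `φ`, is finitely generated
and projective as a right `A`-module. -/
structure FDObj : Type (u + 1) where
  carrier : Type u
  [acg : AddCommGroup carrier]
  [modR : Module Rᵐᵒᵖ carrier]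
  [modA : Module Aᵐᵒᵖ carrier]
  compat : ∀ (a : Aᵐᵒᵖ) (x : carrier), a • x = (RingHom.op φ a) • x
  fin : Module.Finite Aᵐᵒᵖ carrier
  proj : Module.Projective Aᵐᵒᵖ carrier

attribute [instance] FDObj.acg FDObj.modR FDObj.modA

variable {A R φ}

/-- The right `A`-linear dual of an object `P` of `𝒜_R`. -/
abbrev FDObj.dual (P : FDObj A R φ) : Type u := P.carrier →ₗ[Aᵐᵒᵖ] A

/-- Composition of a dual element with a right `R`-linear map, `q* ↦ q* ∘ t`. -/
def FDObj.compDual {P Q : FDObj A R φ} (t : P.carrier →ₗ[Rᵐᵒᵖ] Q.carrier)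
    (g : Q.dual) : P.dual where
  toFun := fun p => g (t p)
  map_add' := by intro p q; simp
  map_smul' := by
    intro a p
    simp only [RingHom.id_apply]
    rw [P.compat a p, map_smul, ← Q.compat a (t p), map_smul]

variable (A R φ)

/-- Generators of the finite dual: triples `(P, p*, p)`. -/
def FDGen : Type (u + 1) := Σ P : FDObj A R φ, P.dual × P.carrier

/-- The relations defining the finite dual coring `R°`: additivity in each tensor slot
(yielding the tensor products `P* ⊗_{T_P} P`) together with the relations
`q* ⊗ t·p − q*·t ⊗ p` for right `R`-linear maps `t : P → Q`. -/
def FDRel : Set (FreeAbelianGroup (FDGen A R φ)) :=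
  { x | (∃ (P : FDObj A R φ) (f g : P.dual) (p : P.carrier),
          x = FreeAbelianGroup.of ⟨P, (f + g, p)⟩
              - FreeAbelianGroup.of ⟨P, (f, p)⟩ - FreeAbelianGroup.of ⟨P, (g, p)⟩) ∨
        (∃ (P : FDObj A R φ) (f : P.dual) (p q : P.carrier),
          x = FreeAbelianGroup.of ⟨P, (f, p + q)⟩
              - FreeAbelianGroup.of ⟨P, (f, p)⟩ - FreeAbelianGroup.of ⟨P, (f, q)⟩) ∨
        (∃ (P Q : FDObj A R φ) (t : P.carrier →ₗ[Rᵐᵒᵖ] Q.carrier)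
            (g : Q.dual) (p : P.carrier),
          x = FreeAbelianGroup.of ⟨Q, (g, t p)⟩
              - FreeAbelianGroup.of ⟨P, (FDObj.compDual t g, p)⟩) }

/-- The right finite dual `R°` of the ring extension `φ : A → R`, as an abelian group. -/
def FinDual : Type (u + 1) :=
  FreeAbelianGroup (FDGen A R φ) ⧸ AddSubgroup.closure (FDRel A R φ)

noncomputable instance : AddCommGroup (FinDual A R φ) :=
  QuotientAddGroup.Quotient.addCommGroup _

/-- The right `A`-linear dual `R* = Hom_A(R, A)` of `R` (as a right `A`-module via `φ`),
realized as the additive subgroup of `R →+ A` of right `A`-linear maps. -/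
def RStar : AddSubgroup (R →+ A) where
  carrier := { f | ∀ (r : R) (a : A), f (r * φ a) = f r * a }
  add_mem' := by
    intro f g hf hg r a
    simp [hf r a, hg r a, add_mul]
  zero_mem' := by intro r a; simp
  neg_mem' := by
    intro f hf r a
    simp [hf r a, neg_mul]

/-- The functional `ζ(p* ⊗ p) : r ↦ p*(p·r)` attached to a generator. -/
def zetaGen (g : FDGen A R φ) : R →+ A where
  toFun := fun r => g.2.1 ((op r : Rᵐᵒᵖ) • g.2.2)
  map_zero' := by simp
  map_add' := by
    intro r s
    show g.2.1 ((op (r + s) : Rᵐᵒᵖ) • g.2.2) = _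
    rw [op_add, add_smul, map_add]

lemma zetaGen_mem (g : FDGen A R φ) : zetaGen A R φ g ∈ RStar A R φ := by
  intro r a
  have h1 : (op (r * φ a) : Rᵐᵒᵖ) = (RingHom.op φ (op a)) * op r := rfl
  have h2 : ((RingHom.op φ (op a)) * op r) • g.2.2
      = (RingHom.op φ (op a)) • ((op r : Rᵐᵒᵖ) • g.2.2) := mul_smul _ _ _
  have h3 : (RingHom.op φ (op a)) • ((op r : Rᵐᵒᵖ) • g.2.2)
      = (op a : Aᵐᵒᵖ) • ((op r : Rᵐᵒᵖ) • g.2.2) := (g.1.compat (op a) _).symm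
  show g.2.1 ((op (r * φ a) : Rᵐᵒᵖ) • g.2.2) = g.2.1 ((op r : Rᵐᵒᵖ) • g.2.2) * a
  rw [h1, h2, h3, map_smul]
  rfl

/-- `ζ` on the free abelian group on generators. -/
noncomputable def zetaHat : FreeAbelianGroup (FDGen A R φ) →+ ↥(RStar A R φ) :=
  FreeAbelianGroup.lift (fun g => ⟨zetaGen A R φ g, zetaGen_mem A R φ g⟩)

lemma FDRel_le_ker : AddSubgroup.closure (FDRel A R φ) ≤ (zetaHat A R φ).ker := by
  rw [AddSubgroup.closure_le]
  rintro x hx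
  simp only [SetLike.mem_coe, AddMonoidHom.mem_ker]
  obtain (⟨P, f, g, p, rfl⟩ | ⟨P, f, p, q, rfl⟩ | ⟨P, Q, t, g, p, rfl⟩) := hx
  · rw [map_sub, map_sub, sub_sub, sub_eq_zero]
    apply Subtype.ext; apply AddMonoidHom.ext; intro r
    simp only [zetaHat, AddSubgroup.coe_add, AddMonoidHom.add_apply]
    erw [FreeAbelianGroup.lift_apply_of, FreeAbelianGroup.lift_apply_of,
      FreeAbelianGroup.lift_apply_of]
    simp only [zetaGen, AddMonoidHom.coe_mk, ZeroHom.coe_mk,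
      LinearMap.add_apply]
    rfl
  · rw [map_sub, map_sub, sub_sub, sub_eq_zero]
    apply Subtype.ext; apply AddMonoidHom.ext; intro r
    simp only [zetaHat, AddSubgroup.coe_add, AddMonoidHom.add_apply]
    erw [FreeAbelianGroup.lift_apply_of, FreeAbelianGroup.lift_apply_of,
      FreeAbelianGroup.lift_apply_of]
    simp only [zetaGen, AddMonoidHom.coe_mk, ZeroHom.coe_mk,
      smul_add, map_add]
    exact f.map_add _ _
  · rw [map_sub, sub_eq_zero]
    apply Subtype.ext; apply AddMonoidHom.ext; intro r
    simp only [zetaHat]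
    erw [FreeAbelianGroup.lift_apply_of, FreeAbelianGroup.lift_apply_of]
    simp only [zetaGen, AddMonoidHom.coe_mk,
      ZeroHom.coe_mk, FDObj.compDual, LinearMap.coe_mk, AddHom.coe_mk]
    exact congrArg g (t.map_smul (MulOpposite.op r) p).symm

/-- The canonical map `ζ : R° → R*`. -/
noncomputable def zeta : FinDual A R φ →+ ↥(RStar A R φ) :=
  QuotientAddGroup.lift _ (zetaHat A R φ) (FDRel_le_ker A R φ)

/-!
Every element of `R°` is the class of a single tensor `f ⊗ p` with `p ∈ P`, since `𝒜_R` is closed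
under finite products. If `ζ(f ⊗ p) = 0`, then `p` lies in the kernel of the right `R`-linear map
`q ↦ ζ(f ⊗ q) : P → R*`, so by hypothesis `p = g x` for some `g : ⨁ Qᵢ → P` with image in that
kernel. Evaluating at `1` shows `f ∘ g = 0`, and the relation `f ⊗ t q = (f ∘ t) ⊗ q` applied to
the components `tᵢ : Qᵢ → P` of `g` gives `f ⊗ g x = 0`.
-/

section

variable {A R φ}

namespace FDObj

def zero : FDObj A R φ where
  carrier := PUnit
  compat _ _ := Subsingleton.elim _ _
  fin := inferInstance
  proj := inferInstance

def prod (P Q : FDObj A R φ) : FDObj A R φ where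
  carrier := P.carrier × Q.carrier
  compat a x := Prod.ext (P.compat a x.1) (Q.compat a x.2)
  fin := by have := P.fin; have := Q.fin; infer_instance
  proj := by have := P.proj; have := Q.proj; infer_instance

/-- `f.coprod g`, typed as a dual of `P.prod Q` so that it fits `FinDual.mk (P.prod Q)`. -/
def coprodDual {P Q : FDObj A R φ} (f : P.dual) (g : Q.dual) : (P.prod Q).dual :=
  f.coprod g

end FDObj

namespace FinDual

def mk (P : FDObj A R φ) (f : P.dual) (p : P.carrier) : FinDual A R φ :=
  QuotientAddGroup.mk (FreeAbelianGroup.of ⟨P, (f, p)⟩)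

theorem mk_eq_mk_of_sub_mem {x y : FreeAbelianGroup (FDGen A R φ)} (h : x - y ∈ FDRel A R φ) :
    (QuotientAddGroup.mk x : FinDual A R φ) = QuotientAddGroup.mk y :=
  QuotientAddGroup.eq_iff_sub_mem.mpr (AddSubgroup.subset_closure h)

theorem mk_add_left (P : FDObj A R φ) (f g : P.dual) (p : P.carrier) :
    mk P (f + g) p = mk P f p + mk P g p :=
  mk_eq_mk_of_sub_mem (Or.inl ⟨P, f, g, p, sub_add_eq_sub_sub _ _ _⟩)

theorem mk_add_right (P : FDObj A R φ) (f : P.dual) (p q : P.carrier) :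
    mk P f (p + q) = mk P f p + mk P f q :=
  mk_eq_mk_of_sub_mem (Or.inr (Or.inl ⟨P, f, p, q, sub_add_eq_sub_sub _ _ _⟩))

theorem mk_comp {P Q : FDObj A R φ} (t : P.carrier →ₗ[Rᵐᵒᵖ] Q.carrier) (g : Q.dual)
    (p : P.carrier) : mk Q g (t p) = mk P (FDObj.compDual t g) p :=
  mk_eq_mk_of_sub_mem (Or.inr (Or.inr ⟨P, Q, t, g, p, rfl⟩))

@[simp]
theorem mk_zero_left (P : FDObj A R φ) (p : P.carrier) : mk P 0 p = 0 := by
  simpa using mk_add_left P 0 0 p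

@[simp]
theorem mk_zero_right (P : FDObj A R φ) (f : P.dual) : mk P f 0 = 0 := by
  simpa using mk_add_right P f 0 0

theorem mk_neg_left (P : FDObj A R φ) (f : P.dual) (p : P.carrier) :
    mk P (-f) p = -mk P f p :=
  eq_neg_of_add_eq_zero_left (by rw [← mk_add_left, neg_add_cancel, mk_zero_left])

theorem mk_add_mk (P Q : FDObj A R φ) (f : P.dual) (g : Q.dual) (p : P.carrier)
    (q : Q.carrier) :
    mk P f p + mk Q g q = mk (P.prod Q) (FDObj.coprodDual f g) ⟨p, q⟩ := by
  let inl : P.carrier →ₗ[Rᵐᵒᵖ] (P.prod Q).carrier := LinearMap.inl _ _ _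
  let inr : Q.carrier →ₗ[Rᵐᵒᵖ] (P.prod Q).carrier := LinearMap.inr _ _ _
  have hf : FDObj.compDual inl (FDObj.coprodDual f g) = f :=
    LinearMap.ext fun x => show f x + g 0 = f x by rw [map_zero, add_zero]
  have hg : FDObj.compDual inr (FDObj.coprodDual f g) = g :=
    LinearMap.ext fun y => show f 0 + g y = g y by rw [map_zero, zero_add]
  have hpq : inl p + inr q = ⟨p, q⟩ := Prod.ext (add_zero p) (zero_add q)
  rw [← hpq, mk_add_right, mk_comp, mk_comp, hf, hg]

theorem exists_eq_mk (z : FinDual A R φ) :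
    ∃ (P : FDObj A R φ) (f : P.dual) (p : P.carrier), z = mk P f p := by
  obtain ⟨w, rfl⟩ := QuotientAddGroup.mk_surjective z
  induction w using FreeAbelianGroup.induction_on with
  | zero => exact ⟨FDObj.zero, 0, 0, (mk_zero_left _ _).symm⟩
  | of x => exact ⟨x.1, x.2.1, x.2.2, rfl⟩
  | neg x _ => exact ⟨x.1, -x.2.1, x.2.2, (mk_neg_left _ _ _).symm⟩
  | add x y hx hy =>
    obtain ⟨P, f, p, hx⟩ := hx
    obtain ⟨Q, g, q, hy⟩ := hy
    exact ⟨P.prod Q, _, _, (congrArg₂ (· + ·) hx hy).trans (mk_add_mk P Q f g p q)⟩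

theorem mk_apply_eq_zero {P Q : FDObj A R φ} (t : P.carrier →ₗ[Rᵐᵒᵖ] Q.carrier) (f : Q.dual)
    (hft : ∀ p, f (t p) = 0) (p : P.carrier) : mk Q f (t p) = 0 := by
  have : FDObj.compDual t f = 0 := LinearMap.ext hft
  rw [mk_comp, this, mk_zero_left]

open DirectSum in
theorem mk_apply_eq_zero_of_directSum {ι : Type*} [DecidableEq ι] {Q : ι → FDObj A R φ}
    {P : FDObj A R φ} (t : (⨁ i, (Q i).carrier) →ₗ[Rᵐᵒᵖ] P.carrier) (f : P.dual)
    (hft : ∀ x, f (t x) = 0) (x : ⨁ i, (Q i).carrier) : mk P f (t x) = 0 := by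
  induction x using DirectSum.induction_on with
  | zero => rw [map_zero, mk_zero_right]
  | of i q =>
    rw [← lof_eq_of Rᵐᵒᵖ, ← LinearMap.comp_apply]
    exact mk_apply_eq_zero _ f (fun _ => hft _) q
  | add x y hx hy => rw [map_add, mk_add_right, hx, hy, add_zero]

end FinDual

theorem zeta_mk {P : FDObj A R φ} (f : P.dual) (p : P.carrier) :
    zeta A R φ (FinDual.mk P f p) = ⟨zetaGen A R φ ⟨P, (f, p)⟩, zetaGen_mem A R φ _⟩ :=
  FreeAbelianGroup.lift_apply_of _ _

theorem zeta_mk_apply {P : FDObj A R φ} (f : P.dual) (p : P.carrier) (r : R) :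
    (zeta A R φ (FinDual.mk P f p) : R →+ A) r = f (op r • p) := by
  rw [zeta_mk]
  rfl

theorem apply_eq_zero_of_zeta_mk_eq_zero {P : FDObj A R φ} {f : P.dual} {p : P.carrier}
    (h : zeta A R φ (FinDual.mk P f p) = 0) : f p = 0 := by
  simpa [zeta_mk_apply] using congrArg (fun z : RStar A R φ => (z : R →+ A) 1) h

end

open DirectSum in
/-- Let `A → R` be a ring extension.  If for every homomorphism of right
`R`-modules `f : P → R*` with `P` finitely generated projective over `A`, the kernel of `f`
admits a surjection from a direct sum of right `R`-modules each finitely generated projective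
over `A`, then the canonical map `ζ : R° → R*` is injective. -/
theorem zeta_injective_of_kernels_covered
    (A R : Type u) [Ring A] [Ring R] (φ : A →+* R)
    (hker : ∀ (P : FDObj A R φ) (f : P.carrier → ↥(RStar A R φ)),
      (∀ p q : P.carrier, f (p + q) = f p + f q) →
      (∀ (r : R) (p : P.carrier) (s : R),
          (f ((op r : Rᵐᵒᵖ) • p) : R →+ A) s = (f p : R →+ A) (r * s)) →
      ∃ (ι : Type u) (_ : DecidableEq ι) (Q : ι → FDObj A R φ)
        (g : (⨁ i : ι, (Q i).carrier) → P.carrier),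
        (∀ x y, g (x + y) = g x + g y) ∧
        (∀ (r : Rᵐᵒᵖ) (x : ⨁ i : ι, (Q i).carrier), g (r • x) = r • g x) ∧
        Set.range g = { p : P.carrier | f p = 0 }) :
    Function.Injective (zeta A R φ) := by
  rw [injective_iff_map_eq_zero]
  intro z hz
  obtain ⟨P, f, p, rfl⟩ := FinDual.exists_eq_mk z
  obtain ⟨ι, _, Q, g, hg_add, hg_smul, hg_range⟩ :=
    hker P (fun q => zeta A R φ (FinDual.mk P f q))
      (fun p q => by rw [FinDual.mk_add_right, map_add])
      (fun r p s => by rw [zeta_mk_apply, zeta_mk_apply, op_mul, mul_smul])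
  let t : (⨁ i, (Q i).carrier) →ₗ[Rᵐᵒᵖ] P.carrier :=
    { toFun := g, map_add' := hg_add, map_smul' := hg_smul }
  have hft : ∀ x, f (t x) = 0 := fun x =>
    apply_eq_zero_of_zeta_mk_eq_zero (hg_range.le ⟨x, rfl⟩)
  obtain ⟨x, rfl⟩ : p ∈ Set.range g := hg_range ▸ hz
  exact FinDual.mk_apply_eq_zero_of_directSum t f hft x
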